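/- Let X be a finite set, p a pmf on X with p(x) > 0 for all x, and r : X → ℝ. Then the function π ↦ D_KL(π ‖ p) − E_π[r], over pmfs π on X, attains its minimum at π*(x) = p(x)·exp(r(x)) / Σ_y p(y)·exp(r(y)), and the minimum value equals −log Σ_y p(y)·exp(r(y)). -/

import Mathlib

/-!
Write `Z = ∑ p e^r` and `g = p e^r / Z` for the Gibbs distribution. Since `log (g / p) = r - log Z`,
the objective rewrites as `D_KL(q ‖ g) - log Z`, so it is minimised exactly where Gibbs' inequality
`D_KL(q ‖ g) ≥ 0` is tight, namely at `q = g`, with value `-log Z`.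
-/

open Finset Real

lemma sub_le_mul_log_div {q g : ℝ} (hq : 0 ≤ q) (hg : 0 < g) : q - g ≤ q * log (q / g) := by
  have h := mul_le_mul_of_nonneg_left (self_sub_one_le_mul_log (div_nonneg hq hg.le)) hg.le
  calc q - g = g * (q / g - 1) := by field_simp
    _ ≤ g * (q / g * log (q / g)) := h
    _ = q * log (q / g) := by field_simp

lemma sum_mul_log_div_nonneg {ι : Type*} {s : Finset ι} {q g : ι → ℝ}
    (hq : ∀ i ∈ s, 0 ≤ q i) (hg : ∀ i ∈ s, 0 < g i) (hsum : ∑ i ∈ s, g i ≤ ∑ i ∈ s, q i) :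
    0 ≤ ∑ i ∈ s, q i * log (q i / g i) :=
  calc 0 ≤ ∑ i ∈ s, (q i - g i) := by rw [sum_sub_distrib]; linarith
    _ ≤ _ := sum_le_sum fun i hi => sub_le_mul_log_div (hq i hi) (hg i hi)

section GibbsDistribution

variable {X : Type*} [Fintype X] (p r : X → ℝ)

noncomputable def partitionFn : ℝ := ∑ z, p z * exp (r z)

noncomputable def gibbsDist (x : X) : ℝ := p x * exp (r x) / partitionFn p r

noncomputable def klReward (q : X → ℝ) : ℝ := (∑ x, q x * log (q x / p x)) - ∑ x, q x * r x

variable {p}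

lemma partitionFn_pos [Nonempty X] (hp : ∀ x, 0 < p x) : 0 < partitionFn p r :=
  sum_pos (fun x _ => mul_pos (hp x) (exp_pos _)) univ_nonempty

lemma gibbsDist_pos [Nonempty X] (hp : ∀ x, 0 < p x) (x : X) : 0 < gibbsDist p r x :=
  div_pos (mul_pos (hp x) (exp_pos _)) (partitionFn_pos r hp)

lemma sum_gibbsDist [Nonempty X] (hp : ∀ x, 0 < p x) : ∑ x, gibbsDist p r x = 1 := by
  simp_rw [gibbsDist, ← sum_div]
  exact div_self (partitionFn_pos r hp).ne'

lemma log_gibbsDist_div [Nonempty X] (hp : ∀ x, 0 < p x) (x : X) :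
    log (gibbsDist p r x / p x) = r x - log (partitionFn p r) := by
  rw [gibbsDist, div_right_comm, mul_div_cancel_left₀ _ (hp x).ne',
    log_div (exp_ne_zero _) (partitionFn_pos r hp).ne', log_exp]

lemma klReward_eq [Nonempty X] (hp : ∀ x, 0 < p x) (q : X → ℝ) :
    klReward p r q =
      (∑ x, q x * log (q x / gibbsDist p r x)) - log (partitionFn p r) * ∑ x, q x := by
  have pointwise : ∀ x, q x * log (q x / p x) - q x * r x =
      q x * log (q x / gibbsDist p r x) - log (partitionFn p r) * q x := by
    intro x
    rcases eq_or_ne (q x) 0 with hq | hq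
    · simp [hq]
    have hqg : q x / gibbsDist p r x = (q x / p x) / (gibbsDist p r x / p x) := by
      rw [div_div_div_cancel_right₀ (hp x).ne']
    rw [hqg, log_div (div_ne_zero hq (hp x).ne') (div_pos (gibbsDist_pos r hp x) (hp x)).ne',
      log_gibbsDist_div r hp]
    ring
  rw [klReward, mul_sum, ← sum_sub_distrib, ← sum_sub_distrib]
  exact sum_congr rfl fun x _ => pointwise x

lemma klReward_gibbsDist [Nonempty X] (hp : ∀ x, 0 < p x) :
    klReward p r (gibbsDist p r) = -log (partitionFn p r) := by
  simp [klReward_eq r hp, div_self (gibbsDist_pos r hp _).ne', sum_gibbsDist r hp]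

lemma neg_log_partitionFn_le_klReward [Nonempty X] (hp : ∀ x, 0 < p x) {q : X → ℝ}
    (hq : ∀ x, 0 ≤ q x) (hq1 : ∑ x, q x = 1) :
    -log (partitionFn p r) ≤ klReward p r q := by
  have gibbs := sum_mul_log_div_nonneg (s := univ) (fun x _ => hq x)
    (fun x _ => gibbsDist_pos r hp x) (by rw [hq1, sum_gibbsDist r hp])
  rw [klReward_eq r hp, hq1]
  linarith

end GibbsDistribution

theorem kl_reward_min_general {X : Type*} [Fintype X]
    (p : X → ℝ) (hp : ∀ x, 0 < p x)
    (r : X → ℝ) :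
    (∀ q : X → ℝ, (∀ x, 0 ≤ q x) → (∑ x, q x = 1) →
        (∑ x, (fun y => p y * Real.exp (r y) / (∑ z, p z * Real.exp (r z))) x *
            Real.log ((fun y => p y * Real.exp (r y) / (∑ z, p z * Real.exp (r z))) x / p x))
          - (∑ x, (fun y => p y * Real.exp (r y) / (∑ z, p z * Real.exp (r z))) x * r x)
        ≤ (∑ x, q x * Real.log (q x / p x)) - (∑ x, q x * r x)) ∧
      ((∑ x, (fun y => p y * Real.exp (r y) / (∑ z, p z * Real.exp (r z))) x *
            Real.log ((fun y => p y * Real.exp (r y) / (∑ z, p z * Real.exp (r z))) x / p x))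
          - (∑ x, (fun y => p y * Real.exp (r y) / (∑ z, p z * Real.exp (r z))) x * r x)
        = - Real.log (∑ z, p z * Real.exp (r z))) := by
  change (∀ q : X → ℝ, (∀ x, 0 ≤ q x) → ∑ x, q x = 1 →
      klReward p r (gibbsDist p r) ≤ klReward p r q) ∧
    klReward p r (gibbsDist p r) = -log (partitionFn p r)
  rcases isEmpty_or_nonempty X with hX | hX
  · refine ⟨fun q _ hq1 => ?_, ?_⟩
    · simp at hq1
    · simp [klReward, partitionFn]
  rw [klReward_gibbsDist r hp]
  exact ⟨fun q hq hq1 => neg_log_partitionFn_le_klReward r hp hq hq1, rfl⟩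

theorem kl_reward_min {X : Type*} [Fintype X]
    (p : X → ℝ) (hp : ∀ x, 0 < p x) (hp1 : ∑ x, p x = 1)
    (r : X → ℝ) :
    (∀ q : X → ℝ, (∀ x, 0 ≤ q x) → (∑ x, q x = 1) →
        (∑ x, (fun y => p y * Real.exp (r y) / (∑ z, p z * Real.exp (r z))) x *
            Real.log ((fun y => p y * Real.exp (r y) / (∑ z, p z * Real.exp (r z))) x / p x))
          - (∑ x, (fun y => p y * Real.exp (r y) / (∑ z, p z * Real.exp (r z))) x * r x)
        ≤ (∑ x, q x * Real.log (q x / p x)) - (∑ x, q x * r x)) ∧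
      ((∑ x, (fun y => p y * Real.exp (r y) / (∑ z, p z * Real.exp (r z))) x *
            Real.log ((fun y => p y * Real.exp (r y) / (∑ z, p z * Real.exp (r z))) x / p x))
          - (∑ x, (fun y => p y * Real.exp (r y) / (∑ z, p z * Real.exp (r z))) x * r x)
        = - Real.log (∑ z, p z * Real.exp (r z))) :=
  kl_reward_min_general p hp r
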